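/- The operator t(6) is not semisimple: there exists a vector v in the space of functions (ℤ/6ℤ)² → ℂ with t(6)(t(6)v) = 0 but t(6)v ≠ 0. Explicitly, one may take v to be the odd function (v(−x) = −v(x)) given by the vector (0,1,0,0,0,−1, −1,0,0,0,0,0, 0,0,0,−1,0,1, 0,−1,0,0,0,1, 0,−1,0,1,0,0, 1,0,0,0,0,0) in the lexicographic ordering of (ℤ/6ℤ)² with least residues {0,…,5}. -/
import Mathlib


noncomputable section

abbrev SL2Z := Matrix.SpecialLinearGroup (Fin 2) ℤ

def Lmat : SL2Z := ⟨!![1, 1; 0, 1], by decide⟩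
def Rmat : SL2Z := ⟨!![1, 0; 1, 1], by decide⟩

/-- h(6): the complex functions on (ℤ/6ℤ)². -/
abbrev hSp6 := (Fin 2 → ZMod 6) → ℂ

/-- Reduction of SL(2,ℤ) mod 6. -/
def redMap6 : SL2Z →* Matrix.SpecialLinearGroup (Fin 2) (ZMod 6) :=
  Matrix.SpecialLinearGroup.map (Int.castRingHom (ZMod 6))

/-- The permutation representation of SL(2,ℤ) on h(6): (ρ(g)f)(x) = f(g⁻¹x). -/
def rep6 (g : SL2Z) : Module.End ℂ hSp6 :=
  LinearMap.funLeft ℂ ℂ (fun x =>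
    Matrix.mulVec ((redMap6 g⁻¹) : Matrix (Fin 2) (Fin 2) (ZMod 6)) x)

/-- t(6) = (ρ(L) + ρ(R))/2. -/
def tOp6 : Module.End ℂ hSp6 := (2 : ℂ)⁻¹ • (rep6 Lmat + rep6 Rmat)

/-- The explicit generalized eigenvector
(0,1,0,0,0,−1, −1,0,0,0,0,0, 0,0,0,−1,0,1, 0,−1,0,0,0,1, 0,−1,0,1,0,0, 1,0,0,0,0,0)
in the lexicographic ordering of (ℤ/6ℤ)². -/
def vvec : hSp6 := fun x =>
  if x = ![0, 1] then 1 else if x = ![0, 5] then -1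
  else if x = ![1, 0] then -1
  else if x = ![2, 3] then -1 else if x = ![2, 5] then 1
  else if x = ![3, 1] then -1 else if x = ![3, 5] then 1
  else if x = ![4, 1] then -1 else if x = ![4, 3] then 1
  else if x = ![5, 0] then 1 else 0

/-- Integer-valued version of `vvec`, for decidable computation. -/
def vint : (Fin 2 → ZMod 6) → ℤ := fun x =>
  if x = ![0, 1] then 1 else if x = ![0, 5] then -1
  else if x = ![1, 0] then -1
  else if x = ![2, 3] then -1 else if x = ![2, 5] then 1
  else if x = ![3, 1] then -1 else if x = ![3, 5] then 1
  else if x = ![4, 1] then -1 else if x = ![4, 3] then 1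
  else if x = ![5, 0] then 1 else 0

/-- The matrix of L⁻¹ mod 6. -/
def ML : Matrix (Fin 2) (Fin 2) (ZMod 6) := !![1,5;0,1]
/-- The matrix of R⁻¹ mod 6. -/
def MR : Matrix (Fin 2) (Fin 2) (ZMod 6) := !![1,0;5,1]

lemma vvec_cast (x : Fin 2 → ZMod 6) : vvec x = ((vint x : ℤ) : ℂ) := by
  unfold vvec vint
  simp only [apply_ite (fun z : ℤ => (z : ℂ))]
  norm_num

lemma hML : ((redMap6 Lmat⁻¹ : Matrix.SpecialLinearGroup (Fin 2) (ZMod 6)) :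
    Matrix (Fin 2) (Fin 2) (ZMod 6)) = ML := by
  rw [map_inv, Matrix.SpecialLinearGroup.coe_inv]
  simp [redMap6, Lmat, Matrix.adjugate_fin_two, ML, Matrix.SpecialLinearGroup.map]
  decide

lemma hMR : ((redMap6 Rmat⁻¹ : Matrix.SpecialLinearGroup (Fin 2) (ZMod 6)) :
    Matrix (Fin 2) (Fin 2) (ZMod 6)) = MR := by
  rw [map_inv, Matrix.SpecialLinearGroup.coe_inv]
  simp [redMap6, Rmat, Matrix.adjugate_fin_two, MR, Matrix.SpecialLinearGroup.map]
  decide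

lemma rep6_apply (g : SL2Z) (f : hSp6) (x : Fin 2 → ZMod 6) :
    rep6 g f x = f (Matrix.mulVec ((redMap6 g⁻¹) : Matrix (Fin 2) (Fin 2) (ZMod 6)) x) := rfl

lemma tOp6_apply (f : hSp6) (x : Fin 2 → ZMod 6) :
    tOp6 f x = (2 : ℂ)⁻¹ * (f (ML.mulVec x) + f (MR.mulVec x)) := by
  simp only [tOp6, LinearMap.smul_apply, LinearMap.add_apply, Pi.smul_apply, Pi.add_apply,
    rep6_apply, hML, hMR, smul_eq_mul, mul_add]

/-- Integer-valued version of t(6)·v (up to the factor 1/2). -/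
def wint : (Fin 2 → ZMod 6) → ℤ := fun x => vint (ML.mulVec x) + vint (MR.mulVec x)

lemma tv_eq (x : Fin 2 → ZMod 6) : tOp6 vvec x = (2 : ℂ)⁻¹ * ((wint x : ℤ) : ℂ) := by
  rw [tOp6_apply, vvec_cast, vvec_cast, wint]
  push_cast
  ring

/-- t(6) is not semisimple: the odd vector `vvec` satisfies t(6)²v = 0 but t(6)v ≠ 0. -/
theorem t6_not_semisimple :
    (∀ x, vvec (-x) = -vvec x) ∧ tOp6 (tOp6 vvec) = 0 ∧ tOp6 vvec ≠ 0 := by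
  refine ⟨fun x => ?_, ?_, ?_⟩
  · rw [vvec_cast, vvec_cast]
    have : vint (-x) = -vint x := by revert x; decide
    rw [this]; push_cast; ring
  · funext x
    rw [tOp6_apply, tv_eq, tv_eq]
    have : wint (ML.mulVec x) + wint (MR.mulVec x) = 0 := by revert x; decide
    have h2 : ((wint (ML.mulVec x) : ℤ) : ℂ) + ((wint (MR.mulVec x) : ℤ) : ℂ) = 0 := by
      rw [← Int.cast_add, this]; simp
    simp only [Pi.zero_apply]
    linear_combination ((2 : ℂ)⁻¹ * (2 : ℂ)⁻¹) * h2
  · intro h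
    obtain ⟨x, hx⟩ : ∃ x, wint x ≠ 0 := by decide
    have := congrFun h x
    rw [tv_eq] at this
    simp only [Pi.zero_apply, mul_eq_zero, inv_eq_zero, Int.cast_eq_zero] at this
    rcases this with h1 | h1
    · norm_num at h1
    · exact hx h1
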